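/- arXiv:1103.3408 — 4 statements merged into one kernel-verified Lean document; each statement's English description precedes it below -/
import Mathlib

section
/- Every matrix U in U(2) can be written as U = exp(i P₂ λ₂₁) exp(i Y λ₁₂) exp(i P₁ λ₁₁) exp(i P₂ λ₂₂) with λ₂₁, λ₁₁, λ₂₂ ∈ [0, 2π] and λ₁₂ ∈ [0, π/2], where P₁ = diag(1,0), P₂ = diag(0,1) and Y = σ_y = [[0,−i],[i,0]]. -/
/-! A unitary `U` is determined by its first row `(p, q)` and its determinant: its second row is
`(-det U * conj q, det U * conj p)`. Since `(i σ_y)² = -1`, `exp (i b σ_y)` is the rotation by `b`,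
so the product of the four exponentials is
`!![cos b * e^{ic}, sin b * e^{id}; -sin b * e^{i(a+c)}, cos b * e^{i(a+d)}]`, whose determinant
is `e^{i(a+c+d)}`. Hence one takes `c, d` the arguments of `p, q`, `b = arccos |p|`, and `a` with
`e^{i(a+c+d)} = det U`, each angle reduced into `[0, 2π]`. -/

open Matrix Complex Real

/-- The Pauli matrix `σ_y`. -/
noncomputable def sigmaY : Matrix (Fin 2) (Fin 2) ℂ :=
  !![0, -Complex.I; Complex.I, 0]

/-- `P₁ = diag(1,0)`. -/
noncomputable def P1 : Matrix (Fin 2) (Fin 2) ℂ := !![1, 0; 0, 0]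

/-- `P₂ = diag(0,1)`. -/
noncomputable def P2 : Matrix (Fin 2) (Fin 2) ℂ := !![0, 0; 0, 1]

open ComplexConjugate

theorem Complex.exists_mem_Icc_exp_mul_I_eq (t : ℝ) :
    ∃ θ ∈ Set.Icc 0 (2 * π), cexp (θ * I) = cexp (t * I) := by
  refine ⟨toIcoMod two_pi_pos 0 t, Set.Ico_subset_Icc_self ?_, ?_⟩
  · simpa using toIcoMod_mem_Ico two_pi_pos 0 t
  · rw [toIcoMod, ofReal_sub, ofReal_zsmul, ofReal_mul, ofReal_ofNat,
      exp_mul_I_periodic.sub_zsmul_eq]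

theorem Complex.exists_mem_Icc_eq_norm_mul_exp_mul_I (z : ℂ) :
    ∃ θ ∈ Set.Icc 0 (2 * π), z = ‖z‖ * cexp (θ * I) := by
  obtain ⟨θ, hθ, h⟩ := exists_mem_Icc_exp_mul_I_eq z.arg
  exact ⟨θ, hθ, by rw [h, norm_mul_exp_arg_mul_I]⟩

theorem Real.exists_mem_Icc_cos_eq_sin_eq {x y : ℝ} (hx : 0 ≤ x) (hy : 0 ≤ y)
    (h : x ^ 2 + y ^ 2 = 1) : ∃ θ ∈ Set.Icc 0 (π / 2), Real.cos θ = x ∧ Real.sin θ = y := by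
  have hx1 : x ≤ 1 := by nlinarith
  refine ⟨arccos x, ⟨arccos_nonneg x, arccos_le_pi_div_two.mpr hx⟩,
    cos_arccos (by linarith) hx1, ?_⟩
  rw [sin_arccos, show 1 - x ^ 2 = y ^ 2 by linarith, Real.sqrt_sq hy]

theorem NormedSpace.exp_real_smul_of_mul_self_eq_neg_one {A : Type*} [NormedRing A]
    [NormedAlgebra ℝ A] [Algebra ℚ A] {J : A} (hJ : J * J = -1) (t : ℝ) :
    NormedSpace.exp (t • J) = Real.cos t • (1 : A) + Real.sin t • J := by
  let φ := Complex.liftAux J hJ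
  have hφ : Continuous φ := LinearMap.continuous_of_finiteDimensional φ.toLinearMap
  have h := NormedSpace.map_exp φ hφ (t * I)
  rw [← Complex.exp_eq_exp_ℂ, exp_mul_I] at h
  simpa [φ, liftAux_apply, Algebra.algebraMap_eq_smul_one, cos_ofReal_re, sin_ofReal_re] using h.symm

theorem Matrix.exp_diagonal_fin_two (a b : ℂ) :
    NormedSpace.exp !![a, 0; 0, b] = !![cexp a, 0; 0, cexp b] := by
  simpa [diagonal_fin_two, Pi.exp_def, ← Complex.exp_eq_exp_ℂ] using exp_diagonal ![a, b]

theorem exp_smul_P1 (z : ℂ) : NormedSpace.exp (z • P1) = !![cexp z, 0; 0, 1] := by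
  simpa [P1] using exp_diagonal_fin_two z 0

theorem exp_smul_P2 (z : ℂ) : NormedSpace.exp (z • P2) = !![1, 0; 0, cexp z] := by
  simpa [P2] using exp_diagonal_fin_two 0 z

theorem exp_I_mul_smul_sigmaY (t : ℝ) :
    NormedSpace.exp ((I * t) • sigmaY) =
      !![(Real.cos t : ℂ), Real.sin t; -Real.sin t, Real.cos t] := by
  let : NormedRing (Matrix (Fin 2) (Fin 2) ℂ) := Matrix.linftyOpNormedRing
  let : NormedAlgebra ℝ (Matrix (Fin 2) (Fin 2) ℂ) := Matrix.linftyOpNormedAlgebra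
  have hJ : (I • sigmaY) * (I • sigmaY) = -1 := by
    ext i j; fin_cases i <;> fin_cases j <;> simp [sigmaY]
  rw [mul_comm, mul_smul, Complex.coe_smul]
  refine (NormedSpace.exp_real_smul_of_mul_self_eq_neg_one hJ t).trans ?_
  ext i j; fin_cases i <;> fin_cases j <;> simp [sigmaY]

theorem Matrix.adjugate_eq_det_smul_star {n α : Type*} [Fintype n] [DecidableEq n] [CommRing α]
    [StarRing α] {U : Matrix n n α} (hU : U ∈ unitaryGroup n α) :
    adjugate U = det U • star U := by
  calc adjugate U = adjugate U * U * star U := by rw [mul_assoc, hU.2, mul_one]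
    _ = det U • star U := by rw [adjugate_mul, smul_mul_assoc, one_mul]

theorem Matrix.eq_of_mem_unitaryGroup_fin_two {α : Type*} [CommRing α] [StarRing α]
    {U : Matrix (Fin 2) (Fin 2) α} (hU : U ∈ unitaryGroup (Fin 2) α) :
    U = !![U 0 0, U 0 1; -(det U * star (U 0 1)), det U * star (U 0 0)] := by
  have h := congrFun₂ (adjugate_eq_det_smul_star hU)
  rw [adjugate_fin_two] at h
  ext i j; fin_cases i <;> fin_cases j
  · rfl
  · rfl
  · simpa using congrArg Neg.neg (h 1 0)
  · simpa using h 0 0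

theorem Matrix.norm_sq_add_norm_sq_of_mem_unitaryGroup_fin_two
    {U : Matrix (Fin 2) (Fin 2) ℂ} (hU : U ∈ unitaryGroup (Fin 2) ℂ) :
    ‖U 0 0‖ ^ 2 + ‖U 0 1‖ ^ 2 = 1 := by
  have h := congrFun₂ hU.2 0 0
  simp only [mul_apply, Fin.sum_univ_two, star_apply, RCLike.star_def, mul_conj, one_apply_eq,
    ← Complex.sq_norm] at h
  exact_mod_cast h

theorem exp_P2_mul_exp_sigmaY_mul_exp_P1_mul_exp_P2 (a b c d : ℝ) :
    NormedSpace.exp ((I * a) • P2) * NormedSpace.exp ((I * b) • sigmaY) *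
        NormedSpace.exp ((I * c) • P1) * NormedSpace.exp ((I * d) • P2) =
      !![Real.cos b * cexp (c * I), Real.sin b * cexp (d * I);
        -(Real.sin b * cexp (a * I) * cexp (c * I)), Real.cos b * cexp (a * I) * cexp (d * I)] := by
  rw [exp_smul_P2, exp_smul_P2, exp_I_mul_smul_sigmaY, exp_smul_P1, mul_fin_two, mul_fin_two,
    mul_fin_two, mul_comm I, mul_comm I, mul_comm I]
  simp only [EmbeddingLike.apply_eq_iff_eq, vecCons_inj, and_true]
  refine ⟨⟨?_, ?_⟩, ?_, ?_⟩ <;> ring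

/-- Every `U ∈ U(2)` can be written as
`exp(i P₂ λ₂₁) exp(i σ_y λ₁₂) exp(i P₁ λ₁₁) exp(i P₂ λ₂₂)` with
`λ₂₁, λ₁₁, λ₂₂ ∈ [0,2π]` and `λ₁₂ ∈ [0,π/2]`. -/
theorem u2_composite_parameterization
    (U : Matrix (Fin 2) (Fin 2) ℂ) (hU : U ∈ Matrix.unitaryGroup (Fin 2) ℂ) :
    ∃ l21 ∈ Set.Icc (0 : ℝ) (2 * π), ∃ l12 ∈ Set.Icc (0 : ℝ) (π / 2),
      ∃ l11 ∈ Set.Icc (0 : ℝ) (2 * π), ∃ l22 ∈ Set.Icc (0 : ℝ) (2 * π),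
        U = NormedSpace.exp ((Complex.I * (l21 : ℂ)) • P2) *
              NormedSpace.exp ((Complex.I * (l12 : ℂ)) • sigmaY) *
              NormedSpace.exp ((Complex.I * (l11 : ℂ)) • P1) *
              NormedSpace.exp ((Complex.I * (l22 : ℂ)) • P2) := by
  obtain ⟨c, hc, hU00⟩ := exists_mem_Icc_eq_norm_mul_exp_mul_I (U 0 0)
  obtain ⟨d, hd, hU01⟩ := exists_mem_Icc_eq_norm_mul_exp_mul_I (U 0 1)
  obtain ⟨b, hb, hcos, hsin⟩ := exists_mem_Icc_cos_eq_sin_eq (norm_nonneg _) (norm_nonneg _)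
    (norm_sq_add_norm_sq_of_mem_unitaryGroup_fin_two hU)
  obtain ⟨θ, hθ⟩ := (norm_eq_one_iff _).mp (CStarRing.norm_of_mem_unitary (det_of_mem_unitary hU))
  obtain ⟨a, ha, hexp⟩ := exists_mem_Icc_exp_mul_I_eq (θ - c - d)
  have hdet : det U = cexp (a * I) * cexp (c * I) * cexp (d * I) := by
    rw [← hθ, hexp, ← Complex.exp_add, ← Complex.exp_add]
    congr 1
    push_cast
    ring
  have hunit (t : ℝ) : cexp (t * I) * conj (cexp (t * I)) = 1 := by
    rw [mul_conj, normSq_eq_norm_sq, norm_exp_ofReal_mul_I]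
    norm_num
  refine ⟨a, ha, b, hb, c, hc, d, hd, ?_⟩
  rw [exp_P2_mul_exp_sigmaY_mul_exp_P1_mul_exp_P2, eq_of_mem_unitaryGroup_fin_two hU, hdet,
    hU00, hU01, hcos, hsin]
  simp only [EmbeddingLike.apply_eq_iff_eq, vecCons_inj, and_true, true_and, neg_inj, star_mul',
    Complex.star_def, conj_ofReal]
  constructor
  · linear_combination (‖U 0 1‖ * cexp (a * I) * cexp (c * I)) * hunit d
  · linear_combination (‖U 0 0‖ * cexp (a * I) * cexp (d * I)) * hunit c
end

section
/- Let a₁₁, a₂₁ be complex numbers with a₁₁ ≠ 0 and a₂₁ ≠ 0. Then there exist λ₂₁ ∈ [0, π] and λ₁₂ ∈ [0, π/2] such that e^{−iλ₂₁} sin(λ₁₂) a₁₁ + e^{iλ₂₁} cos(λ₁₂) a₂₁ = 0. (The required conditions are arg(e^{2iλ₂₁} a₂₁) = arg(−a₁₁) and tan(λ₁₂) = |a₂₁|/|a₁₁|.) -/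
/-!
Factor out `e^{-iθ}`: it suffices that `sin μ · a₁₁ = -e^{2iθ} cos μ · a₂₁`. The moduli agree
once `(cos μ, sin μ)` points along `(|a₁₁|, |a₂₁|)`, which puts `μ` in `[0, π/2]`; the phases agree
once `2θ ≡ arg a₁₁ - arg a₂₁ + π (mod 2π)`, and that class has a representative `2θ ∈ [0, 2π)`.
-/

open Complex Real

theorem exists_mem_Icc_sin_mul_eq_cos_mul {r s : ℝ} (hr : 0 ≤ r) (hs : 0 ≤ s) :
    ∃ μ ∈ Set.Icc 0 (π / 2), Real.sin μ * r = Real.cos μ * s := by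
  refine ⟨arg ⟨r, s⟩, ⟨arg_nonneg_iff.2 hs, arg_le_pi_div_two_iff.2 (.inl hr)⟩, ?_⟩
  rcases eq_or_ne (⟨r, s⟩ : ℂ) 0 with h | h
  · simp_all [Complex.ext_iff]
  · rw [sin_arg, cos_arg h]
    ring

theorem exists_mem_Icc_exp_two_mul_mul_I_eq (φ : ℝ) :
    ∃ θ ∈ Set.Icc 0 π, exp (2 * θ * I) = exp (φ * I) := by
  obtain ⟨h0, hπ⟩ := toIcoMod_mem_Ico' two_pi_pos φ
  refine ⟨toIcoMod two_pi_pos 0 φ / 2, ⟨by linarith, by linarith⟩, ?_⟩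
  have hdiff : ((toIcoMod two_pi_pos 0 φ : ℝ) : ℂ) - φ =
      (-toIcoDiv two_pi_pos 0 φ : ℤ) * (2 * π) := by
    exact_mod_cast toIcoMod_sub_self_eq_mul two_pi_pos 0 φ
  rw [exp_eq_exp_iff_exists_int]
  exact ⟨-toIcoDiv two_pi_pos 0 φ, by push_cast at hdiff ⊢; linear_combination I * hdiff⟩

theorem elimination_step_general (a11 a21 : ℂ) :
    ∃ l21 ∈ Set.Icc (0 : ℝ) π, ∃ l12 ∈ Set.Icc (0 : ℝ) (π / 2),
      Complex.exp (-Complex.I * (l21 : ℂ)) * (Real.sin l12 : ℂ) * a11 +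
        Complex.exp (Complex.I * (l21 : ℂ)) * (Real.cos l12 : ℂ) * a21 = 0 := by
  obtain ⟨θ, hθ, hphase⟩ := exists_mem_Icc_exp_two_mul_mul_I_eq (arg a11 - arg a21 + π)
  obtain ⟨μ, hμ, hmod⟩ := exists_mem_Icc_sin_mul_eq_cos_mul (norm_nonneg a11) (norm_nonneg a21)
  refine ⟨θ, hθ, μ, hμ, ?_⟩
  have hsplit : exp (I * θ) = exp (-I * θ) * exp (2 * θ * I) := by
    rw [← Complex.exp_add]; ring_nf
  have hturn : exp (2 * θ * I) * exp (arg a21 * I) = -exp (arg a11 * I) := by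
    rw [hphase, ← Complex.exp_add, ← mul_neg_one, ← exp_pi_mul_I, ← Complex.exp_add]
    push_cast; ring_nf
  have hmod' : (Real.sin μ * ‖a11‖ : ℂ) = Real.cos μ * ‖a21‖ := by exact_mod_cast hmod
  rw [hsplit, ← norm_mul_exp_arg_mul_I a11, ← norm_mul_exp_arg_mul_I a21]
  linear_combination exp (-I * θ) * ((Real.cos μ * ‖a21‖ : ℂ) * hturn + exp (arg a11 * I) * hmod')

/-- The elimination step: for nonzero `a₁₁, a₂₁` there exist `λ₂₁ ∈ [0,π]` and
`λ₁₂ ∈ [0,π/2]` with `e^{-iλ₂₁} sin(λ₁₂) a₁₁ + e^{iλ₂₁} cos(λ₁₂) a₂₁ = 0`. -/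
theorem elimination_step (a11 a21 : ℂ) (h11 : a11 ≠ 0) (h21 : a21 ≠ 0) :
    ∃ l21 ∈ Set.Icc (0 : ℝ) π, ∃ l12 ∈ Set.Icc (0 : ℝ) (π / 2),
      Complex.exp (-Complex.I * (l21 : ℂ)) * (Real.sin l12 : ℂ) * a11 +
        Complex.exp (Complex.I * (l21 : ℂ)) * (Real.cos l12 : ℂ) * a21 = 0 :=
  elimination_step_general a11 a21
end

section
/- For 2 ≤ m ≤ d define O_{m,1} = ∏_{n=m}^{d} exp(i Y_{1,n} λ_{1,n}) (product in increasing order of n). Then ⟨m| O_{m,1} |1⟩ = −sin(λ_{1,m}) ∏_{n=m+1}^{d} cos(λ_{1,n}), ⟨m| O_{m,1} |m⟩ = cos(λ_{1,m}), ⟨1| O_{m,1} |m⟩ = sin(λ_{1,m}), and ⟨1| O_{m,1} |1⟩ = ∏_{n=m}^{d} cos(λ_{1,n}). -/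
/-!
Each factor is a plane rotation: `i λ Y_{1,n} = λ B` with `B = |1⟩⟨n| - |n⟩⟨1|`, and `B³ = -B`
collapses the exponential series to Rodrigues' formula `1 + sin λ • B + (1 - cos λ) • B²`.
The rotations with `n > m` leave row `m` and column `m` untouched, and each of them multiplies
the `(1,1)` entry of the product of the later ones by `cos λ_{1,n}`, since those do not touch
row `n`. The four entries then come from applying the rotation in the `(1,m)`-plane on the left.
-/

open Matrix Complex

/-- `Y m n = -i |m⟩⟨n| + i |n⟩⟨m|`. -/
noncomputable def Ymat {d : ℕ} (m n : Fin d) : Matrix (Fin d) (Fin d) ℂ :=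
  (-Complex.I) • Matrix.single m n 1 + Complex.I • Matrix.single n m 1

/-- `O_{m,1} = ∏_{n ≥ m} exp(i Y_{1,n} λ_{1,n})`, product taken in increasing order of `n`;
the index `⟨0, hd⟩ : Fin d` plays the role of the basis vector `|1⟩`. -/
noncomputable def Om1 {d : ℕ} (hd : 0 < d) (lam : Fin d → ℝ) (m : Fin d) :
    Matrix (Fin d) (Fin d) ℂ :=
  (((List.finRange d).filter (fun n => m ≤ n)).map
    (fun n => NormedSpace.exp ((Complex.I * (lam n : ℂ)) • Ymat ⟨0, hd⟩ n))).prod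

section Rodrigues

variable {A : Type*} [Ring A]

theorem pow_odd_of_pow_three_eq_neg {R : Type*} [CommRing R] [Algebra R A] {B : A}
    (hB : B ^ 3 = -B) (k : ℕ) : B ^ (2 * k + 1) = (-1 : R) ^ k • B := by
  induction k with
  | zero => simp
  | succ k ih =>
    rw [show 2 * (k + 1) + 1 = 2 * k + 1 + 2 by ring, pow_add, ih, smul_mul_assoc,
      ← pow_succ', hB, pow_succ, mul_neg_one, neg_smul, smul_neg]

theorem pow_even_of_pow_three_eq_neg {R : Type*} [CommRing R] [Algebra R A] {B : A}
    (hB : B ^ 3 = -B) (k : ℕ) : B ^ (2 * k + 2) = (-1 : R) ^ k • B ^ 2 := by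
  rw [pow_succ, pow_odd_of_pow_three_eq_neg (R := R) hB, smul_mul_assoc, ← sq]

theorem exp_smul_of_pow_three_eq_neg [Algebra ℂ A] [TopologicalSpace A] [IsTopologicalRing A]
    [ContinuousSMul ℂ A] [T2Space A] {B : A} (hB : B ^ 3 = -B) (t : ℂ) :
    NormedSpace.exp (t • B) = 1 + sin t • B + (1 - cos t) • B ^ 2 := by
  set f : ℕ → A := fun n => ((n.factorial : ℂ)⁻¹) • (t • B) ^ n
  have heven : HasSum (fun k => f (2 * k)) (1 + B ^ 2 - cos t • B ^ 2) := by
    refine ((hasSum_ite_eq 0 (1 + B ^ 2)).sub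
      ((hasSum_cos t).smul_const (B ^ 2))).congr_fun fun k => ?_
    rcases k with _ | k
    · simp [f]
    · simp only [f, smul_pow, smul_smul, mul_add, pow_even_of_pow_three_eq_neg (R := ℂ) hB]
      rw [if_neg k.succ_ne_zero, zero_sub, ← neg_smul]
      congr 1
      ring
  have hodd : HasSum (fun k => f (2 * k + 1)) (sin t • B) := by
    refine ((hasSum_sin t).smul_const B).congr_fun fun k => ?_
    simp only [f, smul_pow, smul_smul, pow_odd_of_pow_three_eq_neg (R := ℂ) hB]
    congr 1
    ring
  rw [NormedSpace.exp_eq_tsum ℂ]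
  change ∑' n, f n = _
  rw [(heven.even_add_odd hodd).tsum_eq, sub_smul, one_smul]
  abel

end Rodrigues

namespace Matrix

variable {n R : Type*} [DecidableEq n] [CommRing R]

def planeRotation (i j : n) (c s : R) : Matrix n n R :=
  1 + (c - 1) • (single i i 1 + single j j 1) + s • (single i j 1 - single j i 1)

variable {i j k : n} {c s : R}

theorem planeRotation_row_of_ne (hi : k ≠ i) (hj : k ≠ j) :
    planeRotation i j c s k = (1 : Matrix n n R) k := by
  ext b
  simp [planeRotation, hi.symm, hj.symm]

theorem planeRotation_col_of_ne (hi : k ≠ i) (hj : k ≠ j) (a : n) :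
    planeRotation i j c s a k = (1 : Matrix n n R) a k := by
  simp [planeRotation, hi.symm, hj.symm]

variable [Fintype n]

theorem sq_single_sub_single (hij : i ≠ j) :
    (single i j (1 : R) - single j i 1) ^ 2 = -(single i i 1 + single j j 1) := by
  simp [sq, sub_mul, mul_sub, single_mul_single_of_ne _ _ _ _ hij,
    single_mul_single_of_ne _ _ _ _ hij.symm]
  abel

theorem pow_three_single_sub_single (hij : i ≠ j) :
    (single i j (1 : R) - single j i 1) ^ 3 = -(single i j 1 - single j i 1) := by
  rw [pow_succ, sq_single_sub_single hij]
  simp [add_mul, mul_sub, single_mul_single_of_ne _ _ _ _ hij,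
    single_mul_single_of_ne _ _ _ _ hij.symm]
  abel

theorem planeRotation_mul_apply_left (hij : i ≠ j) (N : Matrix n n R) (b : n) :
    (planeRotation i j c s * N) i b = c * N i b + s * N j b := by
  simp [planeRotation, add_mul, sub_mul, hij]

theorem planeRotation_mul_apply_right (hij : i ≠ j) (N : Matrix n n R) (b : n) :
    (planeRotation i j c s * N) j b = -s * N i b + c * N j b := by
  simp [planeRotation, add_mul, sub_mul, hij.symm]
  ring

theorem list_prod_row_eq_one_row {l : List (Matrix n n R)}
    (hl : ∀ M ∈ l, M k = (1 : Matrix n n R) k) : l.prod k = (1 : Matrix n n R) k := by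
  refine List.prod_induction (fun M : Matrix n n R => M k = (1 : Matrix n n R) k)
    (fun M N hM hN => ?_) rfl hl
  have hMN : (M * N) k = ((1 : Matrix n n R) * N) k := by
    ext b
    simp only [mul_apply, hM]
  rw [hMN, one_mul, hN]

theorem list_prod_col_eq_one_col {l : List (Matrix n n R)}
    (hl : ∀ M ∈ l, ∀ a, M a k = (1 : Matrix n n R) a k) (a : n) :
    l.prod a k = (1 : Matrix n n R) a k := by
  refine List.prod_induction (fun M : Matrix n n R => ∀ a, M a k = (1 : Matrix n n R) a k)
    (fun M N hM hN a => ?_) (fun _ => rfl) hl a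
  calc (M * N) a k = (M * (1 : Matrix n n R)) a k := by simp only [mul_apply, hN]
    _ = (1 : Matrix n n R) a k := by rw [mul_one, hM]

theorem list_prod_map_planeRotation_apply_self (c s : n → R) :
    ∀ {l : List n}, l.Nodup → k ∉ l →
      (l.map fun x => planeRotation k x (c x) (s x)).prod k k = (l.map c).prod
  | [], _, _ => by simp
  | x :: l, hl, hk => by
    obtain ⟨hx, hl⟩ := List.nodup_cons.mp hl
    obtain ⟨hkx, hk⟩ := List.ne_and_not_mem_of_not_mem_cons hk
    have hxk : (l.map fun y => planeRotation k y (c y) (s y)).prod x k = 0 := by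
      rw [list_prod_row_eq_one_row, one_apply_ne hkx.symm]
      exact List.forall_mem_map.2 fun y hy =>
        planeRotation_row_of_ne hkx.symm fun h => hx (h ▸ hy)
    rw [List.map_cons, List.prod_cons, planeRotation_mul_apply_left hkx,
      list_prod_map_planeRotation_apply_self c s hl hk, hxk, List.map_cons, List.prod_cons]
    ring

end Matrix

theorem exp_smul_Ymat {d : ℕ} {i j : Fin d} (hij : i ≠ j) (θ : ℂ) :
    NormedSpace.exp ((I * θ) • Ymat i j) = planeRotation i j (cos θ) (sin θ) := by
  have hY : (I * θ) • Ymat i j = θ • (single i j 1 - single j i 1) := by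
    rw [Ymat]
    match_scalars <;> ring_nf <;> simp [I_sq]
  rw [hY, exp_smul_of_pow_three_eq_neg (pow_three_single_sub_single hij),
    sq_single_sub_single hij, planeRotation]
  module

theorem List.filter_finRange_le_eq_cons {d : ℕ} (m : Fin d) :
    (List.finRange d).filter (fun n => m ≤ n) = m :: (List.finRange d).filter (fun n => m < n) := by
  have hsorted := (List.sortedLT_finRange d).pairwise
  refine (hsorted.filter _).eq_of_mem_iff
    (List.pairwise_cons.2 ⟨fun x hx => by simpa using hx, hsorted.filter _⟩) fun x => ?_
  simp [le_iff_eq_or_lt, eq_comm (a := m)]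

theorem List.prod_map_filter_finRange {d : ℕ} {M : Type*} [CommMonoid M] (p : Fin d → Prop)
    [DecidablePred p] (f : Fin d → M) :
    (((List.finRange d).filter (fun n => p n)).map f).prod = ∏ n ∈ Finset.univ.filter p, f n := by
  rw [← List.prod_toFinset _ ((List.nodup_finRange d).filter _)]
  congr 1
  ext n
  simp

/-- The four matrix elements of `O_{m,1}` used in the Haar-measure derivation. -/
theorem Om1_matrix_entries {d : ℕ} (hd : 0 < d) (lam : Fin d → ℝ)
    (m : Fin d) (hm : 0 < (m : ℕ)) :
    Om1 hd lam m m ⟨0, hd⟩ =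
      -(Real.sin (lam m) : ℂ) *
        ∏ n ∈ Finset.univ.filter (fun n : Fin d => m < n), ((Real.cos (lam n) : ℝ) : ℂ) ∧
    Om1 hd lam m m m = ((Real.cos (lam m) : ℝ) : ℂ) ∧
    Om1 hd lam m ⟨0, hd⟩ m = ((Real.sin (lam m) : ℝ) : ℂ) ∧
    Om1 hd lam m ⟨0, hd⟩ ⟨0, hd⟩ =
      ∏ n ∈ Finset.univ.filter (fun n : Fin d => m ≤ n), ((Real.cos (lam n) : ℝ) : ℂ) := by
  set z : Fin d := ⟨0, hd⟩
  have hzm : z < m := hm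
  set L := (List.finRange d).filter (fun n => m < n)
  have hL : ∀ n ∈ L, m < n := fun n hn => by simpa [L] using hn
  set R := (L.map fun n => planeRotation z n (cos (lam n)) (sin (lam n))).prod
  have hOm : Om1 hd lam m = planeRotation z m (cos (lam m)) (sin (lam m)) * R := by
    rw [Om1, List.filter_finRange_le_eq_cons, List.map_cons, List.prod_cons, exp_smul_Ymat hzm.ne]
    congr 2
    exact List.map_congr_left fun n hn => exp_smul_Ymat (hzm.trans (hL n hn)).ne _
  have hRzz : R z z = ∏ n ∈ Finset.univ.filter (fun n : Fin d => m < n), cos (lam n : ℂ) :=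
    (list_prod_map_planeRotation_apply_self _ _ ((List.nodup_finRange d).filter _)
      fun hz => (hzm.trans (hL z hz)).false).trans (List.prod_map_filter_finRange _ _)
  have hRm : R m = (1 : Matrix (Fin d) (Fin d) ℂ) m :=
    list_prod_row_eq_one_row <| List.forall_mem_map.2 fun n hn =>
      planeRotation_row_of_ne hzm.ne' (hL n hn).ne
  have hRzm : R z m = 0 :=
    (list_prod_col_eq_one_col (List.forall_mem_map.2 fun n hn =>
      planeRotation_col_of_ne hzm.ne' (hL n hn).ne) z).trans (one_apply_ne hzm.ne)
  rw [Finset.filter_le_eq_Ici, ← Finset.mul_prod_Ioi_eq_prod_Ici, ← Finset.filter_lt_eq_Ioi, hOm]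
  refine ⟨?_, ?_, ?_, ?_⟩ <;>
    simp [planeRotation_mul_apply_left hzm.ne, planeRotation_mul_apply_right hzm.ne, hRzz, hRm,
      hRzm, one_apply_ne hzm.ne']
end

section
/- Let μ denote the normalized Haar (probability) measure on the unitary group U(d), d ≥ 1, and let p be an even natural number. Then ∫_{U(d)} |U₁₁|^p dμ(U) = ∏_{n=2}^{d} (2(n−1))/(2(n−1)+p), where U₁₁ denotes the (1,1) matrix entry. In particular for p = 4 this equals 2/(d(d+1)). -/
/-!
Write `m k` for `∫ |U₁₁|^(2k)`. Multiplying row 1 by a root of unity `ζ` is a Haar-preserving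
left translation that multiplies `U₁₁^j * conj U₁₁^l * g U₂₁` by `ζ^(j-l)`, so such moments vanish
unless `j = l`. Rotating rows 1 and 2 by a real rotation `(a, b)` preserves Haar measure as well,
so `∫ |a U₁₁ + b U₂₁|^(2k) = m k`; expanding and discarding the unbalanced terms gives the
polynomial identity `∑ⱼ C(k,j)² a^(2j) b^(2(k-j)) ∫ |U₁₁|^(2j) |U₂₁|^(2(k-j)) = (a² + b²)^k m k`,
whose coefficients yield `C(k,j) ∫ |U₁₁|^(2j) |U₂₁|^(2(k-j)) = m k`, for any second row in place
of row 2. Since the first column is a unit vector, `m k = m (k+1) + ∑_{t ≠ 1} ∫ |U₁₁|^(2k) |U_t1|^2`,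
and each summand is `m (k+1) / (k+1)`; hence `(k+1) m k = (k+d) m (k+1)` and
`m k = 1 / C(k+d-1, k)`, which is the product in the statement.
-/

open Matrix MeasureTheory
open scoped ComplexConjugate

namespace Matrix

variable {n R : Type*} [DecidableEq n]

/-- The identity matrix with the `{r, t} × {r, t}` block replaced by `!![a, b; e, f]`. -/
def pairMatrix [Zero R] [One R] [Add R] (r t : n) (a b e f : R) : Matrix n n R :=
  of fun i j => (if i = r then Pi.single r a + Pi.single t b
    else if i = t then Pi.single r e + Pi.single t f else Pi.single i 1 : n → R) j

section Entries

variable [AddZeroClass R] [One R] {r t : n} (a b e f : R) (i : n)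

theorem pairMatrix_apply_col_left (hrt : r ≠ t) :
    pairMatrix r t a b e f i r = if i = r then a else if i = t then e else 0 := by
  by_cases hi : i = r <;> by_cases hi' : i = t <;> simp_all [pairMatrix, Ne.symm hrt]

theorem pairMatrix_apply_col_right (hrt : r ≠ t) :
    pairMatrix r t a b e f i t = if i = r then b else if i = t then f else 0 := by
  by_cases hi : i = r <;> by_cases hi' : i = t <;> simp_all [pairMatrix, Ne.symm hrt]

theorem pairMatrix_apply_of_col_ne {j : n} (hjr : j ≠ r) (hjt : j ≠ t) :
    pairMatrix r t a b e f i j = if i = j then 1 else 0 := by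
  by_cases hi : i = r <;> by_cases hi' : i = t <;> simp_all [pairMatrix, Pi.single_apply, eq_comm]

end Entries

variable [Fintype n]

theorem pairMatrix_mul_apply [CommSemiring R] (r t : n) (a b e f : R) (N : Matrix n n R)
    (i j : n) :
    (pairMatrix r t a b e f * N) i j =
      if i = r then a * N r j + b * N t j
      else if i = t then e * N r j + f * N t j else N i j := by
  rw [mul_apply]
  split_ifs <;> subst_vars <;>
    simp [pairMatrix, *, add_mul, Finset.sum_add_distrib, Pi.single_apply]

theorem pairMatrix_mul_apply_left [CommSemiring R] (r t : n) (a b e f : R) (N : Matrix n n R)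
    (j : n) : (pairMatrix r t a b e f * N) r j = a * N r j + b * N t j := by
  rw [pairMatrix_mul_apply, if_pos rfl]

theorem pairMatrix_mul_apply_right [CommSemiring R] {r t : n} (hrt : r ≠ t) (a b e f : R)
    (N : Matrix n n R) (j : n) : (pairMatrix r t a b e f * N) t j = e * N r j + f * N t j := by
  rw [pairMatrix_mul_apply, if_neg hrt.symm, if_pos rfl]

theorem pairMatrix_mem_unitaryGroup [CommRing R] [StarRing R] {r t : n} (hrt : r ≠ t)
    {a b e f : R} (hr : a * star a + b * star b = 1) (ht : e * star e + f * star f = 1)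
    (horth : a * star e + b * star f = 0) :
    pairMatrix r t a b e f ∈ unitaryGroup n R := by
  have horth' : e * star a + f * star b = 0 := by
    simpa [mul_comm] using congrArg star horth
  rw [mem_unitaryGroup_iff]
  ext i j
  rw [pairMatrix_mul_apply, star_apply, star_apply, pairMatrix_apply_col_left _ _ _ _ _ hrt,
    pairMatrix_apply_col_right _ _ _ _ _ hrt, one_apply]
  rcases eq_or_ne i r with rfl | hir
  · rcases eq_or_ne j i with rfl | hji
    · simpa using hr
    rcases eq_or_ne j t with rfl | hjt
    · simpa [hji, hrt] using horth
    · simp [hji, hjt, Ne.symm hji]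
  rcases eq_or_ne i t with rfl | hit
  · rcases eq_or_ne j i with rfl | hji
    · simpa [hrt.symm] using ht
    rcases eq_or_ne j r with rfl | hjr
    · simpa [hji, hir] using horth'
    · simp [hji, hjr, Ne.symm hji, hir]
  · simp [hir, hit, star_apply, pairMatrix_apply_of_col_ne _ _ _ _ _ hir hit, eq_comm,
      apply_ite star]

end Matrix

open Polynomial in
theorem eq_zero_of_sum_mul_pow_eq_zero {k : ℕ} {c : ℕ → ℝ}
    (h : ∀ s : ℝ, 0 ≤ s → ∑ j ∈ Finset.range (k + 1), c j * s ^ j = 0) {j : ℕ} (hj : j ≤ k) :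
    c j = 0 := by
  set p : ℝ[X] := ∑ i ∈ Finset.range (k + 1), C (c i) * X ^ i
  have hp : p = 0 := by
    refine eq_zero_of_infinite_isRoot p ((Set.Ici_infinite (0 : ℝ)).mono fun s hs => ?_)
    simpa [p, eval_finsetSum] using h s hs
  simpa [p, finsetSum_coeff, coeff_C_mul_X_pow, Nat.lt_succ_iff.2 hj] using
    congrArg (coeff · j) hp

open Complex (normSq) in
theorem ofReal_normSq_add_pow_eq_sum (x y : ℂ) (a b : ℝ) (k : ℕ) :
    ((normSq (a * x + b * y) ^ k : ℝ) : ℂ) = ∑ j ∈ Finset.range (k + 1),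
      ∑ l ∈ Finset.range (k + 1),
        ((k.choose j * k.choose l * a ^ (j + l) * b ^ (k - j + (k - l)) : ℝ) : ℂ) *
          (x ^ j * conj x ^ l * (y ^ (k - j) * conj y ^ (k - l))) := by
  rw [Complex.ofReal_pow, ← Complex.mul_conj, mul_pow, map_add, map_mul, map_mul,
    Complex.conj_ofReal, Complex.conj_ofReal, add_pow, add_pow, Finset.sum_mul_sum]
  refine Finset.sum_congr rfl fun j _ => Finset.sum_congr rfl fun l _ => ?_
  push_cast
  ring

theorem prod_Icc_two_div_eq_inv_choose (k N : ℕ) :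
    ∏ n ∈ Finset.Icc 2 (N + 1), 2 * ((n : ℝ) - 1) / (2 * ((n : ℝ) - 1) + 2 * k) =
      ((k + N).choose k : ℝ)⁻¹ := by
  induction N with
  | zero => simp
  | succ N ih =>
    rw [Finset.prod_Icc_succ_top (by omega), ih]
    have hchoose : ((k + N).choose k : ℝ) * (k + N + 1) = (k + (N + 1)).choose k * (N + 1) := by
      exact_mod_cast (Nat.choose_mul_succ_eq (k + N) k).trans (by congr 1; omega)
    have hfactor : 2 * (((N + 1 + 1 : ℕ) : ℝ) - 1) / (2 * (((N + 1 + 1 : ℕ) : ℝ) - 1) + 2 * k) =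
        (N + 1) / (k + N + 1) := by
      rw [show ((N + 1 + 1 : ℕ) : ℝ) - 1 = N + 1 by push_cast; ring,
        div_eq_div_iff (by positivity) (by positivity)]
      ring
    have : ((k + N).choose k : ℝ) ≠ 0 := Nat.cast_ne_zero.2 (Nat.choose_pos (by omega)).ne'
    have : ((k + (N + 1)).choose k : ℝ) ≠ 0 := Nat.cast_ne_zero.2 (Nat.choose_pos (by omega)).ne'
    rw [hfactor]
    field_simp
    linear_combination -hchoose

namespace Matrix.UnitaryGroup

open Complex (normSq)
open Finset

variable {n : Type*} [Fintype n] [DecidableEq n]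

theorem sum_normSq_apply (U : unitaryGroup n ℂ) (q : n) :
    ∑ i, normSq ((U : Matrix n n ℂ) i q) = 1 := by
  have h : (star (U : Matrix n n ℂ) * U) q q = 1 := by rw [star_mul_self, one_apply_eq]
  rw [Matrix.mul_apply] at h
  apply Complex.ofReal_injective
  push_cast
  simpa only [Complex.normSq_eq_conj_mul_self, star_apply, Complex.star_def] using h

theorem normSq_apply_le_one (U : unitaryGroup n ℂ) (i j : n) :
    normSq ((U : Matrix n n ℂ) i j) ≤ 1 := by
  rw [← Complex.sq_norm]
  exact pow_le_one₀ (norm_nonneg _) (entry_norm_bound_of_unitary U.2 i j)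

@[fun_prop]
theorem continuous_apply_apply (i j : n) :
    Continuous fun U : unitaryGroup n ℂ => (U : Matrix n n ℂ) i j :=
  continuous_subtype_val.matrix_elem i j

variable [MeasurableSpace (unitaryGroup n ℂ)] [BorelSpace (unitaryGroup n ℂ)]
  (μ : Measure (unitaryGroup n ℂ))

theorem integrable_apply_monomial [IsFiniteMeasure μ] (r t q : n) (j l u v : ℕ) :
    Integrable (fun U : unitaryGroup n ℂ => (U : Matrix n n ℂ) r q ^ j *
      conj ((U : Matrix n n ℂ) r q) ^ l *
      ((U : Matrix n n ℂ) t q ^ u * conj ((U : Matrix n n ℂ) t q) ^ v)) μ := by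
  refine Integrable.of_bound (Continuous.aestronglyMeasurable (by fun_prop)) 1
    (ae_of_all _ fun U => ?_)
  have := entry_norm_bound_of_unitary U.2
  simp only [norm_mul, norm_pow, Complex.norm_conj]
  bound

theorem integrable_normSq_pow_mul [IsFiniteMeasure μ] (r t q : n) (j u : ℕ) :
    Integrable (fun U : unitaryGroup n ℂ => normSq ((U : Matrix n n ℂ) r q) ^ j *
      normSq ((U : Matrix n n ℂ) t q) ^ u) μ := by
  have hcont (i : n) : Continuous fun U : unitaryGroup n ℂ => normSq ((U : Matrix n n ℂ) i q) :=
    Complex.continuous_normSq.comp (continuous_apply_apply i q)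
  refine Integrable.of_bound (((hcont r).pow j).mul ((hcont t).pow u)).aestronglyMeasurable 1
    (ae_of_all _ fun U => ?_)
  have := normSq_apply_le_one U
  have := fun i j => Complex.normSq_nonneg ((U : Matrix n n ℂ) i j)
  simp only [norm_mul, norm_pow, Real.norm_eq_abs, abs_of_nonneg (Complex.normSq_nonneg _)]
  bound

noncomputable def mixedMoment (r t q : n) (j u : ℕ) : ℝ :=
  ∫ U, normSq ((U : Matrix n n ℂ) r q) ^ j * normSq ((U : Matrix n n ℂ) t q) ^ u ∂μ

theorem integral_normSq_pow_eq_add [IsFiniteMeasure μ] (r q : n) (k : ℕ) :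
    ∫ U, normSq ((U : Matrix n n ℂ) r q) ^ k ∂μ =
      ∫ U, normSq ((U : Matrix n n ℂ) r q) ^ (k + 1) ∂μ +
        ∑ t ∈ univ.erase r, mixedMoment μ r t q k 1 := by
  have hsplit (U : unitaryGroup n ℂ) : normSq ((U : Matrix n n ℂ) r q) ^ k =
      ∑ t, normSq ((U : Matrix n n ℂ) r q) ^ k * normSq ((U : Matrix n n ℂ) t q) ^ 1 := by
    simp [← mul_sum, sum_normSq_apply]
  conv_lhs => enter [2, U]; rw [hsplit U]
  rw [integral_finsetSum _ fun t _ => integrable_normSq_pow_mul μ r t q k 1,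
    ← add_sum_erase _ _ (mem_univ r)]
  simp only [mixedMoment, pow_one, ← pow_succ]

variable [μ.IsMulLeftInvariant]

theorem integral_pow_mul_conj_pow_eq_zero {r t : n} (hrt : r ≠ t) (q : n) {j l : ℕ}
    (hjl : j ≠ l) (g : ℂ → ℂ) :
    ∫ U, (U : Matrix n n ℂ) r q ^ j * conj ((U : Matrix n n ℂ) r q) ^ l *
      g ((U : Matrix n n ℂ) t q) ∂μ = 0 := by
  have hζ := Complex.isPrimitiveRoot_exp (j + l + 1) (by omega)
  set ζ := Complex.exp (2 * Real.pi * Complex.I / (j + l + 1 : ℕ))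
  have hζ_unit : ζ * conj ζ = 1 := by
    rw [Complex.mul_conj', hζ.norm'_eq_one (by omega)]
    norm_num
  let V : unitaryGroup n ℂ :=
    ⟨pairMatrix r t ζ 0 0 1, pairMatrix_mem_unitaryGroup hrt (by simpa using hζ_unit) (by simp)
      (by simp)⟩
  have hV (U : unitaryGroup n ℂ) : ((V * U : unitaryGroup n ℂ) : Matrix n n ℂ) r q ^ j *
      conj (((V * U : unitaryGroup n ℂ) : Matrix n n ℂ) r q) ^ l *
      g (((V * U : unitaryGroup n ℂ) : Matrix n n ℂ) t q) =
      (ζ ^ j * conj ζ ^ l) * ((U : Matrix n n ℂ) r q ^ j * conj ((U : Matrix n n ℂ) r q) ^ l *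
        g ((U : Matrix n n ℂ) t q)) := by
    simp only [V, mul_val, pairMatrix_mul_apply_left, pairMatrix_mul_apply_right hrt]
    simp only [zero_mul, add_zero, zero_add, one_mul, map_mul]
    ring
  have hfactor : ζ ^ j * conj ζ ^ l ≠ 1 := by
    intro h
    refine hjl (hζ.pow_inj (by omega) (by omega) ?_)
    calc ζ ^ j = (ζ ^ j * conj ζ ^ l) * ζ ^ l := by
          rw [mul_assoc, ← mul_pow, mul_comm (conj ζ), hζ_unit, one_pow, mul_one]
      _ = ζ ^ l := by rw [h, one_mul]
  have hinv := integral_mul_left_eq_self (μ := μ) (fun U : unitaryGroup n ℂ =>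
    (U : Matrix n n ℂ) r q ^ j * conj ((U : Matrix n n ℂ) r q) ^ l * g ((U : Matrix n n ℂ) t q)) V
  simp only [hV, integral_const_mul] at hinv
  exact (mul_left_eq_self₀.1 hinv).resolve_left hfactor

theorem integral_normSq_add_pow_eq_sum [IsFiniteMeasure μ] {r t : n} (hrt : r ≠ t) (q : n)
    (a b : ℝ) (k : ℕ) :
    ∫ U, normSq (a * (U : Matrix n n ℂ) r q + b * (U : Matrix n n ℂ) t q) ^ k ∂μ =
      ∑ j ∈ range (k + 1),
        (k.choose j : ℝ) ^ 2 * (a ^ 2) ^ j * (b ^ 2) ^ (k - j) * mixedMoment μ r t q j (k - j) := by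
  apply Complex.ofReal_injective
  rw [← integral_complex_ofReal]
  simp_rw [ofReal_normSq_add_pow_eq_sum]
  rw [integral_finsetSum _ fun j _ => integrable_finsetSum _ fun l _ =>
    (integrable_apply_monomial μ r t q _ _ _ _).const_mul _]
  push_cast
  refine sum_congr rfl fun j hj => ?_
  rw [integral_finsetSum _ fun l _ => (integrable_apply_monomial μ r t q _ _ _ _).const_mul _,
    sum_eq_single j]
  · have hdiag (x y : ℂ) (u : ℕ) : x ^ j * conj x ^ j * (y ^ u * conj y ^ u) =
        ((normSq x ^ j * normSq y ^ u : ℝ) : ℂ) := by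
      push_cast
      rw [← Complex.mul_conj, ← Complex.mul_conj]
      ring
    simp_rw [hdiag, integral_const_mul, integral_complex_ofReal]
    rw [mixedMoment]
    ring
  · intro l _ hlj
    rw [integral_const_mul]
    exact mul_eq_zero_of_right _ (integral_pow_mul_conj_pow_eq_zero μ hrt q hlj.symm
      fun y => y ^ (k - j) * conj y ^ (k - l))
  · exact fun hj' => absurd hj hj'

theorem integral_normSq_add_pow_eq_of_sq_add_sq {r t : n} (hrt : r ≠ t) (q : n) {a b : ℝ}
    (hab : a ^ 2 + b ^ 2 = 1) (k : ℕ) :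
    ∫ U, normSq (a * (U : Matrix n n ℂ) r q + b * (U : Matrix n n ℂ) t q) ^ k ∂μ =
      ∫ U, normSq ((U : Matrix n n ℂ) r q) ^ k ∂μ := by
  have hab' : (a : ℂ) * a + b * b = 1 := by exact_mod_cast (by linear_combination hab)
  let V : unitaryGroup n ℂ :=
    ⟨pairMatrix r t a b (-b) a, pairMatrix_mem_unitaryGroup hrt (by simpa using hab')
      (by simpa [add_comm] using hab') (by simp; ring)⟩
  rw [← integral_mul_left_eq_self
    (fun U : unitaryGroup n ℂ => normSq ((U : Matrix n n ℂ) r q) ^ k) V]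
  simp only [V, mul_val, pairMatrix_mul_apply_left]

theorem choose_mul_mixedMoment [IsProbabilityMeasure μ] {r t : n} (hrt : r ≠ t) (q : n)
    {k j : ℕ} (hj : j ≤ k) :
    k.choose j * mixedMoment μ r t q j (k - j) = ∫ U, normSq ((U : Matrix n n ℂ) r q) ^ k ∂μ := by
  set m := ∫ U, normSq ((U : Matrix n n ℂ) r q) ^ k ∂μ
  suffices key : ∀ s : ℝ, 0 ≤ s → ∑ i ∈ range (k + 1),
      ((k.choose i : ℝ) ^ 2 * mixedMoment μ r t q i (k - i) - k.choose i * m) * s ^ i = 0 by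
    have hc : (k.choose j : ℝ) ≠ 0 := by exact_mod_cast (Nat.choose_pos hj).ne'
    apply mul_left_cancel₀ hc
    linear_combination eq_zero_of_sum_mul_pow_eq_zero key hj
  -- the rotation with `a² = s / (s + 1)`, `b² = 1 / (s + 1)`, cleared of denominators
  intro s hs
  have hs1 : 0 < s + 1 := by linarith
  have ha : √(s / (s + 1)) ^ 2 = s / (s + 1) := Real.sq_sqrt (by positivity)
  have hb : √(1 / (s + 1)) ^ 2 = 1 / (s + 1) := Real.sq_sqrt (by positivity)
  have hrot := (integral_normSq_add_pow_eq_sum μ hrt q √(s / (s + 1)) √(1 / (s + 1)) k).symm.trans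
    (integral_normSq_add_pow_eq_of_sq_add_sq μ hrt q (by rw [ha, hb]; field_simp) k)
  rw [ha, hb] at hrot
  have hweight (i : ℕ) (hi : i ∈ range (k + 1)) :
      (s / (s + 1)) ^ i * (1 / (s + 1)) ^ (k - i) * (s + 1) ^ k = s ^ i := by
    rw [← pow_sub_mul_pow (s + 1) (Nat.lt_succ_iff.1 (mem_range.1 hi))]
    simp only [div_pow, one_pow]
    field_simp
  calc _ = (∑ i ∈ range (k + 1), (k.choose i : ℝ) ^ 2 * (s / (s + 1)) ^ i *
          (1 / (s + 1)) ^ (k - i) * mixedMoment μ r t q i (k - i)) * (s + 1) ^ k -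
        m * ∑ i ∈ range (k + 1), s ^ i * 1 ^ (k - i) * k.choose i := by
        rw [sum_mul, mul_sum, ← sum_sub_distrib]
        refine sum_congr rfl fun i hi => ?_
        linear_combination -(k.choose i : ℝ) ^ 2 * mixedMoment μ r t q i (k - i) * hweight i hi
    _ = 0 := by rw [hrot, ← add_pow]; ring

theorem succ_mul_integral_normSq_pow [IsProbabilityMeasure μ] (r q : n) (k : ℕ) :
    (k + 1) * ∫ U, normSq ((U : Matrix n n ℂ) r q) ^ k ∂μ =
      (k + Fintype.card n) * ∫ U, normSq ((U : Matrix n n ℂ) r q) ^ (k + 1) ∂μ := by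
  have hmixed (t : n) (ht : t ∈ univ.erase r) :
      (k + 1) * mixedMoment μ r t q k 1 = ∫ U, normSq ((U : Matrix n n ℂ) r q) ^ (k + 1) ∂μ := by
    simpa [Nat.choose_succ_self_right] using
      choose_mul_mixedMoment μ (ne_of_mem_erase ht).symm q k.le_succ
  rw [integral_normSq_pow_eq_add, mul_add, mul_sum, sum_congr rfl hmixed, sum_const,
    card_erase_of_mem (mem_univ r), card_univ, nsmul_eq_mul,
    Nat.cast_sub (Fintype.card_pos_iff.2 ⟨r⟩)]
  ring

theorem integral_normSq_pow [IsProbabilityMeasure μ] (r q : n) (k : ℕ) :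
    ∫ U, normSq ((U : Matrix n n ℂ) r q) ^ k ∂μ =
      ((k + (Fintype.card n - 1)).choose k : ℝ)⁻¹ := by
  obtain ⟨N, hN⟩ := Nat.exists_eq_add_one.2 (Fintype.card_pos_iff.2 ⟨r⟩)
  rw [hN, Nat.add_sub_cancel]
  induction k with
  | zero => simp
  | succ k ih =>
    have hrec := succ_mul_integral_normSq_pow μ r q k
    have hchoose : ((k + N + 1 : ℕ) : ℝ) * (k + N).choose k =
        (k + N + 1).choose (k + 1) * (k + 1) := by
      exact_mod_cast Nat.add_one_mul_choose_eq (k + N) k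
    rw [ih, hN] at hrec
    rw [show k + 1 + N = k + N + 1 by ring]
    have : ((k + N).choose k : ℝ) ≠ 0 := Nat.cast_ne_zero.2 (Nat.choose_pos (by omega)).ne'
    have : ((k + N + 1).choose (k + 1) : ℝ) ≠ 0 :=
      Nat.cast_ne_zero.2 (Nat.choose_pos (by omega)).ne'
    field_simp at hrec ⊢
    push_cast at hchoose hrec ⊢
    apply mul_left_cancel₀ (by positivity : (k : ℝ) + 1 ≠ 0)
    linear_combination (-∫ U, normSq ((U : Matrix n n ℂ) r q) ^ (k + 1) ∂μ) * hchoose - hrec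

end Matrix.UnitaryGroup

/-- Moments of the top-left entry of a Haar-random unitary:
`∫ |U₁₁|^p dμ = ∏_{n=2}^{d} 2(n-1)/(2(n-1)+p)` for even `p`; in particular for
`p = 4` this equals `2/(d(d+1))`. -/
theorem haar_moment_entry (d : ℕ) (hd : 1 ≤ d) (p : ℕ) (hp : Even p)
    [MeasurableSpace (Matrix.unitaryGroup (Fin d) ℂ)]
    [BorelSpace (Matrix.unitaryGroup (Fin d) ℂ)]
    (μ : Measure (Matrix.unitaryGroup (Fin d) ℂ))
    [μ.IsHaarMeasure] [IsProbabilityMeasure μ] :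
    (∫ U : Matrix.unitaryGroup (Fin d) ℂ,
        (‖(U : Matrix (Fin d) (Fin d) ℂ) ⟨0, hd⟩ ⟨0, hd⟩‖) ^ p ∂μ =
      ∏ n ∈ Finset.Icc 2 d, (2 * ((n : ℝ) - 1)) / (2 * ((n : ℝ) - 1) + p)) ∧
    (p = 4 →
      ∫ U : Matrix.unitaryGroup (Fin d) ℂ,
          (‖(U : Matrix (Fin d) (Fin d) ℂ) ⟨0, hd⟩ ⟨0, hd⟩‖) ^ p ∂μ =
        2 / (d * (d + 1))) := by
  obtain ⟨k, rfl⟩ := hp.two_dvd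
  have hmoment : ∫ U : Matrix.unitaryGroup (Fin d) ℂ,
      ‖(U : Matrix (Fin d) (Fin d) ℂ) ⟨0, hd⟩ ⟨0, hd⟩‖ ^ (2 * k) ∂μ =
        ((k + (d - 1)).choose k : ℝ)⁻¹ := by
    simp_rw [pow_mul, Complex.sq_norm]
    rw [UnitaryGroup.integral_normSq_pow, Fintype.card_fin]
  obtain ⟨N, rfl⟩ : ∃ N, d = N + 1 := ⟨d - 1, by omega⟩
  rw [hmoment, Nat.add_sub_cancel]
  refine ⟨?_, fun hk => ?_⟩
  · push_cast
    exact (prod_Icc_two_div_eq_inv_choose k N).symm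
  · obtain rfl : k = 2 := by omega
    rw [add_comm, Nat.cast_choose_two]
    have : (N : ℝ) + 1 ≠ 0 := by positivity
    have : (N : ℝ) + 2 ≠ 0 := by positivity
    push_cast
    rw [show (N : ℝ) + 2 - 1 = N + 1 by ring]
    field_simp
    ring
end
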